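/- arXiv:1910.11955 — 2 statements merged into one kernel-verified Lean document; each statement's English description precedes it below -/
import Mathlib

section
/- The formal power series F(q, x) = sum over d1, d0 >= 0 of ((4 d1 + d0)! / ((d1!)^4 * d0!)) * q^{d1} * x^{d0} in Q[[q, x]] satisfies the two equations: (i) theta_x F = x * (4 theta_q + theta_x + 1) F, and (ii) theta_q^4 F = q * (4 theta_q + theta_x + 1)(4 theta_q + theta_x + 2)(4 theta_q + theta_x + 3)(4 theta_q + theta_x + 4) F, where theta_q = q * d/dq and theta_x = x * d/dx are the logarithmic derivations on Q[[q, x]]. -/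
open PowerSeries

/-- `θ_q` on `ℚ[[x]][[q]]` (outer variable `q`): `θ_q(q^{d1} x^{d0}) = d1 q^{d1} x^{d0}`. -/
noncomputable def thetaQ (F : PowerSeries (PowerSeries ℚ)) : PowerSeries (PowerSeries ℚ) :=
  PowerSeries.mk fun d1 =>
    PowerSeries.C (d1 : ℚ) * PowerSeries.coeff d1 F

/-- `θ_x` on `ℚ[[x]][[q]]` (inner variable `x`): `θ_x(q^{d1} x^{d0}) = d0 q^{d1} x^{d0}`. -/
noncomputable def thetaX (F : PowerSeries (PowerSeries ℚ)) : PowerSeries (PowerSeries ℚ) :=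
  PowerSeries.mk fun d1 =>
    PowerSeries.mk fun d0 =>
      (d0 : ℚ) * PowerSeries.coeff d0 (PowerSeries.coeff d1 F)

/-- The operator `4θ_q + θ_x + k`. -/
noncomputable def opL (k : ℕ) (F : PowerSeries (PowerSeries ℚ)) : PowerSeries (PowerSeries ℚ) :=
  4 • thetaQ F + thetaX F + (k : ℚ) • F

/-- The period `F(q,x) = ∑ ((4d1+d0)!/((d1!)^4 d0!)) q^{d1} x^{d0}`. -/
noncomputable def FX1 : PowerSeries (PowerSeries ℚ) :=
  PowerSeries.mk fun d1 => PowerSeries.mk fun d0 =>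
    (Nat.factorial (4 * d1 + d0) : ℚ) /
      ((Nat.factorial d1 : ℚ) ^ 4 * (Nat.factorial d0 : ℚ))

/-!
Both operators act diagonally on monomials: `θ_q`, `θ_x` and `4θ_q + θ_x + k` multiply the
coefficient of `q^{d1} x^{d0}` by `d1`, `d0` and `4 d1 + d0 + k`, while multiplication by `x`
or `q` shifts the indices. So each equation is equivalent to a two-term recurrence for
`a(d1, d0) = (4 d1 + d0)! / ((d1!)^4 d0!)`, namely
`(d0 + 1) a(d1, d0 + 1) = (4 d1 + d0 + 1) a(d1, d0)` and
`(d1 + 1)^4 a(d1 + 1, d0) = (4 d1 + d0 + 1) ⋯ (4 d1 + d0 + 4) a(d1, d0)`,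
both of which are immediate from the factorials.
-/

namespace X1tilde

/-- The coefficient of `q^{d1} x^{d0}` in a series of `R[[x]][[q]]`. -/
noncomputable def coeff₂ {R : Type*} [Semiring R] (d1 d0 : ℕ) (F : PowerSeries (PowerSeries R)) :
    R :=
  coeff d0 (coeff d1 F)

section Coeff₂

variable {R : Type*} [Semiring R]

theorem ext₂ {F G : PowerSeries (PowerSeries R)} (h : ∀ d1 d0, coeff₂ d1 d0 F = coeff₂ d1 d0 G) :
    F = G :=
  PowerSeries.ext fun d1 => PowerSeries.ext fun d0 => h d1 d0

theorem coeff₂_C_X_mul_zero (d1 : ℕ) (F : PowerSeries (PowerSeries R)) :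
    coeff₂ d1 0 (C (X : PowerSeries R) * F) = 0 := by
  simp only [coeff₂, coeff_C_mul, coeff_zero_X_mul]

theorem coeff₂_C_X_mul_succ (d1 d0 : ℕ) (F : PowerSeries (PowerSeries R)) :
    coeff₂ d1 (d0 + 1) (C (X : PowerSeries R) * F) = coeff₂ d1 d0 F := by
  simp only [coeff₂, coeff_C_mul, coeff_succ_X_mul]

theorem coeff₂_X_mul_zero (d0 : ℕ) (F : PowerSeries (PowerSeries R)) :
    coeff₂ 0 d0 (X * F) = 0 := by
  simp only [coeff₂, coeff_zero_X_mul, map_zero]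

theorem coeff₂_X_mul_succ (d1 d0 : ℕ) (F : PowerSeries (PowerSeries R)) :
    coeff₂ (d1 + 1) d0 (X * F) = coeff₂ d1 d0 F := by
  simp only [coeff₂, coeff_succ_X_mul]

end Coeff₂

theorem coeff₂_thetaQ (d1 d0 : ℕ) (F : PowerSeries (PowerSeries ℚ)) :
    coeff₂ d1 d0 (thetaQ F) = d1 * coeff₂ d1 d0 F := by
  simp only [coeff₂, thetaQ, coeff_mk, coeff_C_mul]

theorem coeff₂_thetaX (d1 d0 : ℕ) (F : PowerSeries (PowerSeries ℚ)) :
    coeff₂ d1 d0 (thetaX F) = d0 * coeff₂ d1 d0 F := by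
  simp only [coeff₂, thetaX, coeff_mk]

theorem coeff₂_opL (k d1 d0 : ℕ) (F : PowerSeries (PowerSeries ℚ)) :
    coeff₂ d1 d0 (opL k F) = (4 * d1 + d0 + k) * coeff₂ d1 d0 F := by
  have hQ := coeff₂_thetaQ d1 d0 F
  have hX := coeff₂_thetaX d1 d0 F
  simp only [coeff₂, opL, map_add, map_nsmul, coeff_smul, smul_eq_mul] at hQ hX ⊢
  rw [hQ, hX]
  ring

noncomputable def periodCoeff (d1 d0 : ℕ) : ℚ :=
  (Nat.factorial (4 * d1 + d0) : ℚ) / ((Nat.factorial d1 : ℚ) ^ 4 * (Nat.factorial d0 : ℚ))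

theorem coeff₂_FX1 (d1 d0 : ℕ) : coeff₂ d1 d0 FX1 = periodCoeff d1 d0 := by
  simp only [coeff₂, FX1, periodCoeff, coeff_mk]

theorem periodCoeff_succ_right (d1 d0 : ℕ) :
    (d0 + 1 : ℚ) * periodCoeff d1 (d0 + 1) = (4 * d1 + d0 + 1) * periodCoeff d1 d0 := by
  have hd1 : (Nat.factorial d1 : ℚ) ≠ 0 := by positivity
  have hd0 : (Nat.factorial d0 : ℚ) ≠ 0 := by positivity
  rw [periodCoeff, periodCoeff, ← add_assoc, Nat.factorial_succ, Nat.factorial_succ]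
  push_cast
  field_simp

theorem periodCoeff_succ_left (d1 d0 : ℕ) :
    (d1 + 1 : ℚ) ^ 4 * periodCoeff (d1 + 1) d0 =
      (4 * d1 + d0 + 1) * (4 * d1 + d0 + 2) * (4 * d1 + d0 + 3) * (4 * d1 + d0 + 4) *
        periodCoeff d1 d0 := by
  have hd1 : (Nat.factorial d1 : ℚ) ≠ 0 := by positivity
  have hd0 : (Nat.factorial d0 : ℚ) ≠ 0 := by positivity
  have hshift : 4 * (d1 + 1) + d0 = 4 * d1 + d0 + 1 + 1 + 1 + 1 := by ring
  rw [periodCoeff, periodCoeff, hshift]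
  simp only [Nat.factorial_succ]
  push_cast
  field_simp
  ring

end X1tilde

open X1tilde in
/-- `F` satisfies `θ_x F = x (4θ_q + θ_x + 1) F` and
`θ_q^4 F = q (4θ_q+θ_x+1)(4θ_q+θ_x+2)(4θ_q+θ_x+3)(4θ_q+θ_x+4) F`. -/
theorem X1tilde_picard_fuchs :
    (thetaX FX1 =
      PowerSeries.C (PowerSeries.X : PowerSeries ℚ) * opL 1 FX1) ∧
    thetaQ (thetaQ (thetaQ (thetaQ FX1))) =
      PowerSeries.X * opL 1 (opL 2 (opL 3 (opL 4 FX1))) := by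
  constructor
  · refine ext₂ fun d1 d0 => ?_
    rcases d0 with _ | d0
    · simp [coeff₂_thetaX, coeff₂_C_X_mul_zero]
    · rw [coeff₂_thetaX, coeff₂_C_X_mul_succ, coeff₂_opL, coeff₂_FX1, coeff₂_FX1]
      push_cast
      exact periodCoeff_succ_right d1 d0
  · refine ext₂ fun d1 d0 => ?_
    rcases d1 with _ | d1
    · simp [coeff₂_thetaQ, coeff₂_X_mul_zero]
    · simp only [coeff₂_thetaQ, coeff₂_X_mul_succ, coeff₂_opL, coeff₂_FX1]
      push_cast
      linear_combination periodCoeff_succ_left d1 d0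
end

section
/- The formal power series F(q, y) = sum over d1, d0 >= 0 of ((4 d1)! * (d1 + d0)! / ((d1!)^5 * d0!)) * q^{d1} * y^{d0} in Q[[q, y]] satisfies: (i) theta_y F = y * (theta_q + theta_y + 1) F, and (ii) theta_q^4 F = 4 q * (4 theta_q + 1)(4 theta_q + 2)(4 theta_q + 3)(theta_q + theta_y + 1) F, where theta_q = q * d/dq and theta_y = y * d/dy. -/
open PowerSeries

/-- `θ_y` on `ℚ[[y]][[q]]` (inner variable `y`). -/
noncomputable def thetaY (F : PowerSeries (PowerSeries ℚ)) : PowerSeries (PowerSeries ℚ) :=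
  PowerSeries.mk fun d1 =>
    PowerSeries.mk fun d0 =>
      (d0 : ℚ) * PowerSeries.coeff d0 (PowerSeries.coeff d1 F)

/-- The operator `4θ_q + k`. -/
noncomputable def opM (k : ℕ) (F : PowerSeries (PowerSeries ℚ)) : PowerSeries (PowerSeries ℚ) :=
  4 • thetaQ F + (k : ℚ) • F

/-- The operator `θ_q + θ_y + 1`. -/
noncomputable def opN (F : PowerSeries (PowerSeries ℚ)) : PowerSeries (PowerSeries ℚ) :=
  thetaQ F + thetaY F + F

/-- The period `F(q,y) = ∑ ((4d1)! (d1+d0)!/((d1!)^5 d0!)) q^{d1} y^{d0}`. -/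
noncomputable def FX2 : PowerSeries (PowerSeries ℚ) :=
  PowerSeries.mk fun d1 => PowerSeries.mk fun d0 =>
    (Nat.factorial (4 * d1) : ℚ) * (Nat.factorial (d1 + d0) : ℚ) /
      ((Nat.factorial d1 : ℚ) ^ 5 * (Nat.factorial d0 : ℚ))

/-! Since `θ_q` and `θ_y` act diagonally on the monomials `q^a y^b`, each equation amounts to a
first-order recurrence for the coefficients `c(a, b)` of `F`, in `b` and in `a` respectively, and
these recurrences are just the ratios `c(a, b + 1) / c(a, b)` and `c(a + 1, b) / c(a, b)` of
factorial expressions. -/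

section Coefficients

variable (F : PowerSeries (PowerSeries ℚ)) (a b : ℕ)

@[simp]
lemma coeff_coeff_thetaQ :
    coeff b (coeff a (thetaQ F)) = (a : ℚ) * coeff b (coeff a F) := by
  rw [thetaQ, coeff_mk, coeff_C_mul]

@[simp]
lemma coeff_coeff_thetaY :
    coeff b (coeff a (thetaY F)) = (b : ℚ) * coeff b (coeff a F) := by
  rw [thetaY, coeff_mk, coeff_mk]

@[simp]
lemma coeff_coeff_opN :
    coeff b (coeff a (opN F)) = ((a : ℚ) + b + 1) * coeff b (coeff a F) := by
  simp only [opN, map_add, coeff_coeff_thetaQ, coeff_coeff_thetaY]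
  ring

@[simp]
lemma coeff_coeff_opM (k : ℕ) :
    coeff b (coeff a (opM k F)) = (4 * (a : ℚ) + k) * coeff b (coeff a F) := by
  rw [opM, map_add, map_nsmul, coeff_smul, map_add, map_nsmul, coeff_smul, coeff_coeff_thetaQ]
  simp only [smul_eq_mul, nsmul_eq_mul, Nat.cast_ofNat]
  ring

end Coefficients

lemma thetaY_eq_C_X_mul_opN_of_coeff_succ {F : PowerSeries (PowerSeries ℚ)}
    (h : ∀ a b : ℕ, ((b : ℚ) + 1) * coeff (b + 1) (coeff a F) =
      ((a : ℚ) + b + 1) * coeff b (coeff a F)) :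
    thetaY F = C (X : PowerSeries ℚ) * opN F := by
  ext a b : 2
  rw [coeff_C_mul]
  cases b with
  | zero => simp
  | succ b => simpa [coeff_succ_X_mul] using h a b

lemma thetaQ_pow_four_eq_of_coeff_succ {F : PowerSeries (PowerSeries ℚ)}
    (h : ∀ a b : ℕ, ((a : ℚ) + 1) ^ 4 * coeff b (coeff (a + 1) F) =
      4 * ((4 * a + 1) * (4 * a + 2) * (4 * a + 3) * (a + b + 1)) * coeff b (coeff a F)) :
    thetaQ (thetaQ (thetaQ (thetaQ F))) = 4 • (X * opM 1 (opM 2 (opM 3 (opN F)))) := by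
  ext a : 1
  rw [map_nsmul]
  cases a with
  | zero => simp [thetaQ]
  | succ a =>
    ext b : 1
    rw [coeff_succ_X_mul, map_nsmul]
    simp only [coeff_coeff_thetaQ, coeff_coeff_opM, coeff_coeff_opN, nsmul_eq_mul]
    push_cast
    linear_combination h a b

lemma coeff_coeff_FX2 (a b : ℕ) :
    coeff b (coeff a FX2) = ((4 * a).factorial : ℚ) * (a + b).factorial /
      ((a.factorial : ℚ) ^ 5 * b.factorial) := by
  rw [FX2, coeff_mk, coeff_mk]

lemma FX2_coeff_succ_right (a b : ℕ) :
    ((b : ℚ) + 1) * coeff (b + 1) (coeff a FX2) =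
      ((a : ℚ) + b + 1) * coeff b (coeff a FX2) := by
  rw [coeff_coeff_FX2, coeff_coeff_FX2, ← add_assoc, Nat.factorial_succ (a + b),
    Nat.factorial_succ b]
  have := a.factorial_ne_zero
  have := b.factorial_ne_zero
  push_cast
  field_simp

lemma FX2_coeff_succ_left (a b : ℕ) :
    ((a : ℚ) + 1) ^ 4 * coeff b (coeff (a + 1) FX2) =
      4 * ((4 * a + 1) * (4 * a + 2) * (4 * a + 3) * (a + b + 1)) * coeff b (coeff a FX2) := by
  rw [coeff_coeff_FX2, coeff_coeff_FX2, show 4 * (a + 1) = 4 * a + 3 + 1 by ring,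
    Nat.factorial_succ (4 * a + 3), Nat.factorial_succ (4 * a + 2),
    Nat.factorial_succ (4 * a + 1), Nat.factorial_succ (4 * a),
    Nat.add_right_comm a 1 b, Nat.factorial_succ (a + b), Nat.factorial_succ a]
  have := a.factorial_ne_zero
  have := b.factorial_ne_zero
  push_cast
  field_simp
  ring

/-- `F` satisfies `θ_y F = y (θ_q + θ_y + 1) F` and
`θ_q^4 F = 4 q (4θ_q+1)(4θ_q+2)(4θ_q+3)(θ_q+θ_y+1) F`. -/
theorem X2tilde_picard_fuchs :
    (thetaY FX2 =
      PowerSeries.C (PowerSeries.X : PowerSeries ℚ) * opN FX2) ∧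
    thetaQ (thetaQ (thetaQ (thetaQ FX2))) =
      4 • (PowerSeries.X * opM 1 (opM 2 (opM 3 (opN FX2)))) :=
  ⟨thetaY_eq_C_X_mul_opN_of_coeff_succ FX2_coeff_succ_right,
    thetaQ_pow_four_eq_of_coeff_succ FX2_coeff_succ_left⟩
end
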